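/- Let X be a subspace of R^N with orthonormal basis U, and let X1, X2 be mutually orthogonal subspaces of X. Suppose Φ ∈ R^{n×N} satisfies 1 − δ < s_min(ΦU)^2 ≤ s_max(ΦU)^2 < 1 + δ with δ ∈ (0,1/4). Let Y2 = ΦX2 and let P_{Y2} denote the orthogonal projection onto Y2. Then for every u ∈ X1, ||P_{Y2} Φ u|| ≤ sqrt(4/3) · δ · ||u||. -/

import Mathlib

/-!
Polarization turns the near-isometry of `Φ` on `X` into `⟪Φa, Φb⟫ ≤ δ ‖a‖ ‖b‖` for orthogonal
`a, b ∈ X`. Writing `P_{Y2} Φu = Φv` with `v ∈ X2`, we get `‖Φv‖² = ⟪Φu, Φv⟫ ≤ δ ‖u‖ ‖v‖`, while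
`‖Φv‖ ≥ √(1 - δ) ‖v‖`; hence `√(1 - δ) ‖P_{Y2} Φu‖ ≤ δ ‖u‖`, and `√(1 - δ) ≥ √(3/4)` for `δ < 1/4`.
-/

noncomputable section
open scoped RealInnerProductSpace Matrix

/-- The `j`-th column of a matrix, as a vector in Euclidean space. -/
def col {m k : ℕ} (A : Matrix (Fin m) (Fin k) ℝ) (j : Fin k) : EuclideanSpace ℝ (Fin m) :=
  WithLp.toLp 2 (fun i => A i j)

/-- Orthogonal projection onto a subspace, as an endomorphism. -/
def projE {m : ℕ} (K : Submodule ℝ (EuclideanSpace ℝ (Fin m))) :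
    EuclideanSpace ℝ (Fin m) →ₗ[ℝ] EuclideanSpace ℝ (Fin m) :=
  K.subtype ∘ₗ K.orthogonalProjectionOnto.toLinearMap

/-- Frobenius norm of a real matrix. -/
def frob {m k : ℕ} (A : Matrix (Fin m) (Fin k) ℝ) : ℝ :=
  Real.sqrt (∑ i, ∑ j, (A i j) ^ 2)

/-- Operator (spectral) norm of a real matrix, w.r.t. Euclidean norms. -/
def opn {m k : ℕ} (A : Matrix (Fin m) (Fin k) ℝ) : ℝ :=
  ‖LinearMap.toContinuousLinearMap (Matrix.toEuclideanLin A)‖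

def NearIsometryOn {E F : Type*} [NormedAddCommGroup E] [NormedAddCommGroup F]
    [NormedSpace ℝ E] [NormedSpace ℝ F] (T : E →ₗ[ℝ] F) (X : Submodule ℝ E) (δ : ℝ) : Prop :=
  ∀ x ∈ X, (1 - δ) * ‖x‖ ^ 2 ≤ ‖T x‖ ^ 2 ∧ ‖T x‖ ^ 2 ≤ (1 + δ) * ‖x‖ ^ 2

namespace NearIsometryOn

section Normed

variable {E E' F : Type*} [NormedAddCommGroup E] [NormedAddCommGroup E'] [NormedAddCommGroup F]
  [NormedSpace ℝ E] [NormedSpace ℝ E'] [NormedSpace ℝ F] {T : E →ₗ[ℝ] F} {δ : ℝ}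

theorem top_of_norm_eq_one (h : ∀ x : E, ‖x‖ = 1 → 1 - δ ≤ ‖T x‖ ^ 2 ∧ ‖T x‖ ^ 2 ≤ 1 + δ) :
    NearIsometryOn T ⊤ δ := by
  intro x _
  rcases eq_or_ne x 0 with rfl | hx
  · simp
  have hx' : ‖x‖ ≠ 0 := norm_ne_zero_iff.mpr hx
  have hunit : ‖‖x‖⁻¹ • x‖ = 1 := by rw [norm_smul, norm_inv, norm_norm, inv_mul_cancel₀ hx']
  have hscale : ‖T x‖ ^ 2 = ‖x‖ ^ 2 * ‖T (‖x‖⁻¹ • x)‖ ^ 2 := by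
    rw [map_smul, norm_smul, norm_inv, norm_norm, mul_pow, ← mul_assoc, ← mul_pow,
      mul_inv_cancel₀ hx', one_pow, one_mul]
  obtain ⟨hlo, hhi⟩ := h _ hunit
  rw [hscale]
  constructor <;> nlinarith [sq_nonneg ‖x‖]

theorem of_comp_isometry (V : E' →ₗᵢ[ℝ] E) (h : NearIsometryOn (T ∘ₗ V.toLinearMap) ⊤ δ) :
    NearIsometryOn T (LinearMap.range V.toLinearMap) δ := by
  rintro _ ⟨y, rfl⟩
  simpa using h y trivial

end Normed

section Inner

variable {E F : Type*} [NormedAddCommGroup E] [NormedAddCommGroup F]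
  [InnerProductSpace ℝ E] [InnerProductSpace ℝ F] {T : E →ₗ[ℝ] F} {X : Submodule ℝ E} {δ : ℝ}

theorem inner_le_of_inner_eq_zero (hT : NearIsometryOn T X δ) {a b : E} (ha : a ∈ X)
    (hb : b ∈ X) (hab : ⟪a, b⟫ = 0) :
    ⟪T a, T b⟫ ≤ δ / 2 * (‖a‖ ^ 2 + ‖b‖ ^ 2) := by
  have hadd := (hT _ (X.add_mem ha hb)).2
  have hsub := (hT _ (X.sub_mem ha hb)).1
  rw [map_add, norm_add_sq_real, norm_add_sq_real, hab] at hadd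
  rw [map_sub, norm_sub_sq_real, norm_sub_sq_real, hab] at hsub
  linarith

theorem inner_le_mul_of_inner_eq_zero (hT : NearIsometryOn T X δ) {a b : E} (ha : a ∈ X)
    (hb : b ∈ X) (hab : ⟪a, b⟫ = 0) :
    ⟪T a, T b⟫ ≤ δ * ‖a‖ * ‖b‖ := by
  rcases eq_or_ne a 0 with rfl | ha0
  · simp
  rcases eq_or_ne b 0 with rfl | hb0
  · simp
  -- `‖b‖ • a` and `‖a‖ • b` have equal norms, where `δ/2 (‖a‖² + ‖b‖²)` is `δ ‖a‖ ‖b‖`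
  have h := hT.inner_le_of_inner_eq_zero (X.smul_mem ‖b‖ ha) (X.smul_mem ‖a‖ hb)
    (by rw [real_inner_smul_left, real_inner_smul_right, hab, mul_zero, mul_zero])
  simp only [map_smul, real_inner_smul_left, real_inner_smul_right, norm_smul, norm_norm] at h
  have hr : 0 < ‖a‖ * ‖b‖ := mul_pos (norm_pos_iff.mpr ha0) (norm_pos_iff.mpr hb0)
  nlinarith

theorem sqrt_one_sub_mul_norm_starProjection_le (hT : NearIsometryOn T X δ) (hδ : 0 ≤ δ)
    {X₁ X₂ : Submodule ℝ E} (hX₁ : X₁ ≤ X) (hX₂ : X₂ ≤ X) (horth : X₁ ⟂ X₂)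
    [(X₂.map T).HasOrthogonalProjection] {u : E} (hu : u ∈ X₁) :
    Real.sqrt (1 - δ) * ‖(X₂.map T).starProjection (T u)‖ ≤ δ * ‖u‖ := by
  set w := (X₂.map T).starProjection (T u)
  obtain ⟨v, hv, hvw⟩ : w ∈ X₂.map T := (X₂.map T).starProjection_apply_mem (T u)
  have hw_sq : ‖w‖ ^ 2 = ⟪T u, T v⟫ := by
    have := (X₂.map T).starProjection_inner_eq_zero (T u) w
      ((X₂.map T).starProjection_apply_mem (T u))
    rw [inner_sub_left, real_inner_self_eq_norm_sq] at this
    rw [hvw]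
    linarith
  have hupper : ‖w‖ ^ 2 ≤ δ * ‖u‖ * ‖v‖ :=
    hw_sq ▸ hT.inner_le_mul_of_inner_eq_zero (hX₁ hu) (hX₂ hv) (horth.inner_eq hu hv)
  have hlower : Real.sqrt (1 - δ) * ‖v‖ ≤ ‖w‖ := by
    have := Real.sqrt_le_sqrt ((hT v (hX₂ hv)).1)
    rwa [Real.sqrt_mul' _ (sq_nonneg _), Real.sqrt_sq (norm_nonneg _),
      Real.sqrt_sq (norm_nonneg _), hvw] at this
  rcases (norm_nonneg w).eq_or_lt with hw0 | hw0
  · rw [← hw0, mul_zero]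
    positivity
  refine le_of_mul_le_mul_right ?_ hw0
  calc Real.sqrt (1 - δ) * ‖w‖ * ‖w‖ = Real.sqrt (1 - δ) * ‖w‖ ^ 2 := by ring
    _ ≤ Real.sqrt (1 - δ) * (δ * ‖u‖ * ‖v‖) := by gcongr
    _ = δ * ‖u‖ * (Real.sqrt (1 - δ) * ‖v‖) := by ring
    _ ≤ δ * ‖u‖ * ‖w‖ := by gcongr

end Inner

end NearIsometryOn

theorem toEuclideanLin_single_one_eq_col {m k : ℕ} (A : Matrix (Fin m) (Fin k) ℝ) (j : Fin k) :
    Matrix.toEuclideanLin A (EuclideanSpace.single j 1) = col A j := by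
  ext i
  simp [Matrix.toLpLin_apply, col]

theorem range_toEuclideanLin_eq_span_col {m k : ℕ} (A : Matrix (Fin m) (Fin k) ℝ) :
    LinearMap.range (Matrix.toEuclideanLin A) = Submodule.span ℝ (Set.range (col A)) := by
  rw [LinearMap.range_eq_map, ← (EuclideanSpace.basisFun (Fin k) ℝ).toBasis.span_eq,
    Submodule.map_span, ← Set.range_comp]
  congr 2
  ext1 j
  simp [toEuclideanLin_single_one_eq_col]

theorem nearIsometryOn_span_col {N n d : ℕ} {U : Matrix (Fin N) (Fin d) ℝ}
    (hU : Orthonormal ℝ (col U)) {Φ : Matrix (Fin n) (Fin N) ℝ} {δ : ℝ}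
    (h : ∀ x : EuclideanSpace ℝ (Fin d), ‖x‖ = 1 →
      1 - δ ≤ ‖Matrix.toEuclideanLin (Φ * U) x‖ ^ 2 ∧ ‖Matrix.toEuclideanLin (Φ * U) x‖ ^ 2 ≤ 1 + δ) :
    NearIsometryOn (Matrix.toEuclideanLin Φ) (Submodule.span ℝ (Set.range (col U))) δ := by
  have hcols : Orthonormal ℝ
      (Matrix.toEuclideanLin U ∘ (EuclideanSpace.basisFun (Fin d) ℝ).toBasis) := by
    convert hU using 1
    ext1 j
    simp [toEuclideanLin_single_one_eq_col]
  have hbasis : Orthonormal ℝ (EuclideanSpace.basisFun (Fin d) ℝ).toBasis := by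
    rw [OrthonormalBasis.coe_toBasis]
    exact (EuclideanSpace.basisFun (Fin d) ℝ).orthonormal
  let V := (Matrix.toEuclideanLin U).isometryOfOrthonormal hbasis hcols
  have hV : V.toLinearMap = Matrix.toEuclideanLin U :=
    LinearMap.isometryOfOrthonormal_toLinearMap _ _ _
  rw [← range_toEuclideanLin_eq_span_col, ← hV]
  refine NearIsometryOn.of_comp_isometry V ?_
  rw [hV, ← Matrix.toLpLin_mul_same]
  exact NearIsometryOn.top_of_norm_eq_one h

/-- For orthogonal subspaces `X1 ⊥ X2` of `X` on which `Φ` is a near-isometry with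
`δ ∈ (0,1/4)`, the projection of `Φu` onto `Y2 = ΦX2` is small: `‖P_{Y2}Φu‖ ≤ √(4/3)·δ·‖u‖`. -/
theorem proj_image_orthogonal_le {N n d : ℕ} (δ : ℝ) (hδ : δ ∈ Set.Ioo (0 : ℝ) (1/4))
    (X X1 X2 : Submodule ℝ (EuclideanSpace ℝ (Fin N)))
    (hX1 : X1 ≤ X) (hX2 : X2 ≤ X)
    (horth : ∀ u ∈ X1, ∀ v ∈ X2, ⟪u, v⟫ = 0)
    (U : Matrix (Fin N) (Fin d) ℝ)
    (hU : Orthonormal ℝ (col U)) (hs : Submodule.span ℝ (Set.range (col U)) = X)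
    (Φ : Matrix (Fin n) (Fin N) ℝ)
    (hiso : ∀ x : EuclideanSpace ℝ (Fin d), ‖x‖ = 1 →
      1 - δ < ‖Matrix.toEuclideanLin (Φ * U) x‖ ^ 2 ∧
      ‖Matrix.toEuclideanLin (Φ * U) x‖ ^ 2 < 1 + δ) :
    ∀ u ∈ X1,
      ‖projE (X2.map (Matrix.toEuclideanLin Φ)) (Matrix.toEuclideanLin Φ u)‖
        ≤ Real.sqrt (4/3) * δ * ‖u‖ := by
  intro u hu
  have hT : NearIsometryOn (Matrix.toEuclideanLin Φ) X δ :=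
    hs ▸ nearIsometryOn_span_col hU fun x hx => ⟨(hiso x hx).1.le, (hiso x hx).2.le⟩
  have hbound := hT.sqrt_one_sub_mul_norm_starProjection_le hδ.1.le hX1 hX2
    (Submodule.isOrtho_iff_inner_eq.2 horth) hu
  have hsqrt : 1 ≤ Real.sqrt (4/3) * Real.sqrt (1 - δ) := by
    rw [← Real.sqrt_mul (by norm_num), Real.one_le_sqrt]
    linarith [hδ.2]
  change ‖(X2.map (Matrix.toEuclideanLin Φ)).starProjection _‖ ≤ _
  calc _ ≤ Real.sqrt (4/3) * Real.sqrt (1 - δ) * ‖_‖ :=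
        le_mul_of_one_le_left (norm_nonneg _) hsqrt
    _ ≤ Real.sqrt (4/3) * (δ * ‖u‖) := by rw [mul_assoc]; gcongr
    _ = Real.sqrt (4/3) * δ * ‖u‖ := by ring
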